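/- (Lemma on small pods.) There is a function φ : (0,1/2] → [0,∞) with φ(σ) → 0 as σ → 0, such that if p̃ and q̃ are pods each of dimension (max of length and diameter) at most σ, then the corresponding standard pods p, q satisfy Δ(p,q) ≤ φ(σ). Concretely, one may take φ(σ) = 2σ/(σ^{2/3} − σ²) + Σ_{n ≥ σ^{-1/3}} 2^{-n}. -/

import Mathlib

open Set Filter Topology

/-- A path of Π′: a continuous real path starting at time `t0 ∈ [0,1]` from a point of `[-1,1]`,
represented by its extension to `[0,∞)` (constant equal to `f t0` before `t0`). -/
structure PathP where
  t0 : ℝ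
  f : ℝ → ℝ
  ht0 : t0 ∈ Set.Icc (0:ℝ) 1
  hf : Continuous f
  hconst : ∀ t ≤ t0, f t = f t0
  hstart : f t0 ∈ Set.Icc (-1:ℝ) 1

/-- `sup_{t ∈ [0,n+1]} |f̂(t) - ĝ(t)|`. -/
noncomputable def supAbs (γ η : PathP) (n : ℕ) : ℝ :=
  ⨆ t : Set.Icc (0:ℝ) ((n:ℝ)+1), |γ.f t - η.f t|

/-- The sup-type metric d′ on Π′. -/
noncomputable def dprime (γ η : PathP) : ℝ :=
  max |γ.t0 - η.t0| (∑' n : ℕ, (2:ℝ)⁻¹ ^ (n+1) * min (supAbs γ η n) 1)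

/-- The set `{t > t⁺ : f₁(t) = f₂(t)}` whose infimum is the coalescence time. -/
def coalSet (γ η : PathP) : Set ℝ :=
  {t : ℝ | max γ.t0 η.t0 < t ∧ γ.f t = η.f t}

/-- The pair coalesces: either `t^c = ∞` or the two paths agree from `t^c` on. -/
def Coalesces (γ η : PathP) : Prop :=
  coalSet γ η = ∅ ∨ ∀ t, sInf (coalSet γ η) ≤ t → γ.f t = η.f t

/-- An ordered coalescing pair of paths: an element of the space 𝒞. -/
structure CoalPair where
  p1 : PathP
  p2 : PathP
  ordered : ∀ t, max p1.t0 p2.t0 ≤ t → p1.f t ≤ p2.f t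
  coal : Coalesces p1 p2

/-- The beginning `t⁺` of the pod. -/
noncomputable def tPlus (F : CoalPair) : ℝ := max F.p1.t0 F.p2.t0

/-- The coalescence time (meaningful when `tcFinite F`). -/
noncomputable def tcReal (F : CoalPair) : ℝ := sInf (coalSet F.p1 F.p2)

/-- The coalescence time is finite. -/
def tcFinite (F : CoalPair) : Prop := (coalSet F.p1 F.p2).Nonempty

/-- Inverse of `tanh`. -/
noncomputable def artanh (x : ℝ) : ℝ := Real.log ((1 + x) / (1 - x)) / 2

/-- The pod function in the `tanh` time variable. -/
noncomputable def podT (F : CoalPair) (x : ℝ) : ℝ :=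
  F.p2.f (artanh x) - F.p1.f (artanh x)

noncomputable def ttPlus (F : CoalPair) : ℝ := Real.tanh (tPlus F)

open Classical in
/-- `Ψ(t^c)`, with the convention `Ψ(∞) = 1`. -/
noncomputable def ttc (F : CoalPair) : ℝ :=
  if tcFinite F then Real.tanh (tcReal F) else 1

noncomputable def ttm (F : CoalPair) : ℝ := (ttPlus F + ttc F) / 2

/-- The standard pod of a coalescing pair. -/
noncomputable def stdPod (F : CoalPair) : ℝ → ℝ := fun x =>
  let a := ttPlus F
  let c := ttc F
  let m := ttm F
  let mid := podT F m + (1 - (c - m)) / 2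
  if x ≤ m - a then podT F (x + a)
  else if x ≤ 1/2 then
    podT F m + (x - (m - a)) * (mid - podT F m) / (1/2 - (m - a))
  else if x ≤ 1 - (c - m) then
    mid + (x - 1/2) * (podT F m - mid) / ((1 - (c - m)) - 1/2)
  else podT F (x - (1 - c))

/-- The pod-comparison functional Δ. -/
noncomputable def Delta (p q : ℝ → ℝ) : ℝ :=
  ∑' n : ℕ, (2:ℝ)⁻¹ ^ (n+2) *
    min (⨆ x : Set.Icc (((n:ℝ)+2)⁻¹) (1 - ((n:ℝ)+2)⁻¹), |1 / p x - 1 / q x|) 1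

/-- The Hausdorff-type function d̄ = max_i min_j d′. -/
noncomputable def dbar (F G : CoalPair) : ℝ :=
  max (min (dprime F.p1 G.p1) (dprime F.p1 G.p2))
      (min (dprime F.p2 G.p1) (dprime F.p2 G.p2))

/-- The metric d̃ = d̄ + Δ on 𝒞. -/
noncomputable def dtilde (F G : CoalPair) : ℝ :=
  dbar F G + Delta (stdPod F) (stdPod G)


/-- The (horizontal) diameter of the pod of a coalescing pair. -/
noncomputable def podDiam (F : CoalPair) : ℝ :=
  ⨆ x : Set.Ioo (ttPlus F) (ttc F), podT F x

/-- The dimension of a pod: the max of its length and its diameter. -/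
noncomputable def podDim (F : CoalPair) : ℝ :=
  max (tcReal F - tPlus F) (podDiam F)

/-!
On a window `[δ, 1 - δ]` with `δ > 4σ`, a standard pod of dimension `≤ σ` shows only its linear
part, and that part stays within `σ` of the tent `min x (1 - x)`: at `x = L / 2` it starts at the
midpoint height `D ≤ σ`, and its slope exceeds `1` by `O(L)`, where the length `L` after the `tanh`
time change is still `≤ σ`. Two such pods therefore have `|1/p - 1/q| ≤ 4σ / δ²` on the window,
the remaining terms of `Δ` are bounded by `1` anyway, and dominated convergence sends the resulting
bound on `Δ` to `0` with `σ`.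
-/

namespace Real

lemma hasDerivAt_tanh (x : ℝ) : HasDerivAt tanh (cosh x ^ 2)⁻¹ x := by
  have h := (hasDerivAt_sinh x).div (hasDerivAt_cosh x) (cosh_pos x).ne'
  rw [show sinh / cosh = tanh from funext fun y => (tanh_eq_sinh_div_cosh y).symm] at h
  refine h.congr_deriv ?_
  rw [← sq, ← sq, cosh_sq_sub_sinh_sq x, one_div]

lemma strictMono_tanh : StrictMono tanh :=
  strictMono_of_deriv_pos fun x => by rw [(hasDerivAt_tanh x).deriv]; positivity

lemma tanh_sub_tanh_le {a b : ℝ} (hab : a ≤ b) : tanh b - tanh a ≤ b - a := by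
  have hdiff : Differentiable ℝ tanh := fun x => (hasDerivAt_tanh x).differentiableAt
  have hderiv (x : ℝ) : deriv tanh x ≤ 1 := by
    rw [(hasDerivAt_tanh x).deriv]
    exact inv_le_one_of_one_le₀ (one_le_pow₀ (one_le_cosh x))
  simpa using image_sub_le_mul_sub_of_deriv_le hdiff hderiv hab

end Real

lemma artanh_eq_real_artanh {x : ℝ} (hx : x ∈ Icc (-1 : ℝ) 1) : artanh x = Real.artanh x := by
  rw [Real.artanh_eq_half_log hx, artanh]
  ring

lemma artanh_tanh (t : ℝ) : artanh (Real.tanh t) = t := by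
  rw [artanh_eq_real_artanh ⟨(Real.neg_one_lt_tanh t).le, (Real.tanh_lt_one t).le⟩,
    Real.artanh_tanh]

lemma le_artanh_of_tanh_le {t x : ℝ} (htx : Real.tanh t ≤ x) (hx : x < 1) : t ≤ artanh x := by
  have hx' : -1 < x := (Real.neg_one_lt_tanh t).trans_le htx
  rw [← artanh_tanh t, artanh_eq_real_artanh ⟨hx'.le, hx.le⟩,
    artanh_eq_real_artanh ⟨(Real.neg_one_lt_tanh t).le, (Real.tanh_lt_one t).le⟩]
  exact Real.artanh_le_artanh (Real.neg_one_lt_tanh t) hx htx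

lemma continuousOn_artanh : ContinuousOn artanh (Ioo (-1) 1) := by
  have hsub : ∀ x ∈ Ioo (-1 : ℝ) 1, 1 - x ≠ 0 := fun x hx => by linarith [hx.2]
  have hquot : ∀ x ∈ Ioo (-1 : ℝ) 1, (1 + x) / (1 - x) ≠ 0 := fun x hx =>
    div_ne_zero (by linarith [hx.1]) (hsub x hx)
  exact (((continuousOn_const.add continuousOn_id).div
    (continuousOn_const.sub continuousOn_id) hsub).log hquot).div_const 2

namespace CoalPair

variable (F : CoalPair)

lemma tPlus_nonneg : 0 ≤ tPlus F :=
  le_max_of_le_left F.p1.ht0.1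

lemma ttPlus_nonneg : 0 ≤ ttPlus F := by
  simpa [ttPlus] using Real.strictMono_tanh.monotone F.tPlus_nonneg

lemma tcReal_sub_tPlus_le_podDim : tcReal F - tPlus F ≤ podDim F :=
  le_max_left _ _

variable {F}

lemma tPlus_le_tcReal (hF : tcFinite F) : tPlus F ≤ tcReal F :=
  le_csInf hF fun _ ht => ht.1.le

lemma ttc_eq_tanh (hF : tcFinite F) : ttc F = Real.tanh (tcReal F) :=
  if_pos hF

lemma ttPlus_le_ttc (hF : tcFinite F) : ttPlus F ≤ ttc F := by
  rw [ttc_eq_tanh hF]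
  exact Real.strictMono_tanh.monotone (tPlus_le_tcReal hF)

lemma ttc_lt_one (hF : tcFinite F) : ttc F < 1 := by
  rw [ttc_eq_tanh hF]
  exact Real.tanh_lt_one _

lemma ttc_sub_ttPlus_le (hF : tcFinite F) : ttc F - ttPlus F ≤ tcReal F - tPlus F := by
  rw [ttc_eq_tanh hF]
  exact Real.tanh_sub_tanh_le (tPlus_le_tcReal hF)

lemma podT_nonneg {x : ℝ} (hx₁ : ttPlus F ≤ x) (hx₂ : x < 1) : 0 ≤ podT F x :=
  sub_nonneg.2 (F.ordered _ (le_artanh_of_tanh_le hx₁ hx₂))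

lemma podT_eq_zero (hF : tcFinite F) {x : ℝ} (hx₁ : ttc F ≤ x) (hx₂ : x < 1) :
    podT F x = 0 := by
  rcases F.coal with hempty | hcoal
  · exact absurd hempty hF.ne_empty
  · rw [ttc_eq_tanh hF] at hx₁
    exact sub_eq_zero.2 (hcoal _ (le_artanh_of_tanh_le hx₁ hx₂)).symm

lemma continuousOn_podT : ContinuousOn (podT F) (Ioo (-1) 1) :=
  (F.p2.hf.comp_continuousOn continuousOn_artanh).sub
    (F.p1.hf.comp_continuousOn continuousOn_artanh)

lemma podT_le_podDiam (hF : tcFinite F) {x : ℝ} (hx : x ∈ Ioo (ttPlus F) (ttc F)) :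
    podT F x ≤ podDiam F := by
  have hIcc : Icc (ttPlus F) (ttc F) ⊆ Ioo (-1) 1 := fun y hy =>
    ⟨by linarith [hy.1, F.ttPlus_nonneg], hy.2.trans_lt (ttc_lt_one hF)⟩
  have hbdd : BddAbove (range fun y : Ioo (ttPlus F) (ttc F) => podT F y) := by
    rw [← image_eq_range]
    exact (isCompact_Icc.bddAbove_image (continuousOn_podT.mono hIcc)).mono
      (image_mono Ioo_subset_Icc_self)
  exact le_ciSup hbdd ⟨x, hx⟩

lemma podT_ttm_le_podDim (hF : tcFinite F) : podT F (ttm F) ≤ podDim F := by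
  rcases (ttPlus_le_ttc hF).lt_or_eq with hlt | heq
  · have hmem : ttm F ∈ Ioo (ttPlus F) (ttc F) := by constructor <;> rw [ttm] <;> linarith
    exact (podT_le_podDiam hF hmem).trans (le_max_right _ _)
  · -- a pod of length zero vanishes at its midpoint
    have hm : ttm F = ttc F := by rw [ttm, heq]; ring
    rw [hm, podT_eq_zero hF le_rfl (ttc_lt_one hF)]
    exact (sub_nonneg.2 (tPlus_le_tcReal hF)).trans (le_max_left _ _)

end CoalPair

/-- The linear part of a standard pod of length `L` whose value at `x = L / 2` is `D`, evaluated
at distance `y` from the nearer end of `[0, 1]`; it is symmetric about `x = 1 / 2`. -/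
noncomputable def podSegment (L D y : ℝ) : ℝ :=
  D + (y - L / 2) * ((1 - L / 2) / 2) / (1 / 2 - L / 2)

lemma abs_podSegment_sub_le {L D σ y : ℝ} (hL₀ : 0 ≤ L) (hLσ : L ≤ σ) (hL₁ : L < 1)
    (hD₀ : 0 ≤ D) (hDσ : D ≤ σ) (hy₁ : L / 2 ≤ y) (hy₂ : y ≤ 1 / 2) :
    |podSegment L D y - y| ≤ σ := by
  have hC : 0 < 1 / 2 - L / 2 := by linarith
  set q := (y - L / 2) * ((1 - L / 2) / 2) / (1 / 2 - L / 2)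
  -- the slope `(1 - L/2) / (1 - L)` exceeds `1` by at most `L/4` over a run of length `≤ 1/2 - L/2`
  have hq_ge : y - L / 2 ≤ q := by
    rw [le_div_iff₀ hC]
    nlinarith [mul_nonneg (sub_nonneg.2 hy₁) hL₀]
  have hq_le : q ≤ y - L / 4 := by
    rw [div_le_iff₀ hC]
    nlinarith [mul_nonneg hL₀ (sub_nonneg.2 hy₂)]
  rw [podSegment, abs_le]
  constructor <;> linarith

namespace CoalPair

variable {F : CoalPair}

lemma stdPod_eq_podSegment {x : ℝ} (hx₁ : (ttc F - ttPlus F) / 2 < x)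
    (hx₂ : x ≤ 1 - (ttc F - ttPlus F) / 2) :
    stdPod F x = podSegment (ttc F - ttPlus F) (podT F (ttm F)) (min x (1 - x)) := by
  have hm₁ : ttm F - ttPlus F = (ttc F - ttPlus F) / 2 := by rw [ttm]; ring
  have hm₂ : ttc F - ttm F = (ttc F - ttPlus F) / 2 := by rw [ttm]; ring
  simp only [stdPod, podSegment, hm₁, hm₂, if_neg hx₁.not_ge, if_pos hx₂]
  generalize ttc F - ttPlus F = L at *
  have hC : 1 - L ≠ 0 := by linarith
  split_ifs with hhalf
  · rw [min_eq_left (by linarith)]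
    ring
  · rw [min_eq_right (by linarith), show 1 - L / 2 - 1 / 2 = 1 / 2 - L / 2 by ring]
    field_simp
    ring

lemma abs_stdPod_sub_min_le (hF : tcFinite F) {σ x : ℝ} (hdim : podDim F ≤ σ)
    (hx : x ∈ Ioo (σ / 2) (1 - σ / 2)) : |stdPod F x - min x (1 - x)| ≤ σ := by
  have hL₀ : 0 ≤ ttc F - ttPlus F := sub_nonneg.2 (ttPlus_le_ttc hF)
  have hLσ : ttc F - ttPlus F ≤ σ :=
    (ttc_sub_ttPlus_le hF).trans ((tcReal_sub_tPlus_le_podDim F).trans hdim)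
  rw [stdPod_eq_podSegment (by linarith [hx.1]) (by linarith [hx.2])]
  exact abs_podSegment_sub_le hL₀ hLσ (by linarith [ttc_lt_one hF, F.ttPlus_nonneg])
    (podT_nonneg (by rw [ttm]; linarith) (by rw [ttm]; linarith [ttc_lt_one hF]))
    ((podT_ttm_le_podDim hF).trans hdim)
    (le_min (by linarith [hx.1]) (by linarith [hx.2])) (min_le_iff.2 (by grind))

end CoalPair

lemma abs_one_div_sub_one_div_le {p q t σ : ℝ} (hp : |p - t| ≤ σ) (hq : |q - t| ≤ σ)
    (ht : 4 * σ ≤ t) : |1 / p - 1 / q| ≤ 4 * σ / t ^ 2 := by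
  obtain ⟨hp₁, hp₂⟩ := abs_le.1 hp
  obtain ⟨hq₁, hq₂⟩ := abs_le.1 hq
  rcases (abs_nonneg _ |>.trans hp).eq_or_lt with hσ | hσ
  · rw [show p = q by linarith, sub_self, abs_zero, ← hσ, mul_zero, zero_div]
  have ht₀ : 0 < t := by linarith
  have hpq : 9 * t ^ 2 / 16 ≤ p * q := by nlinarith
  have hpq₀ : 0 < p * q := lt_of_lt_of_le (by positivity) hpq
  have hqp : |q - p| ≤ 2 * σ := abs_le.2 ⟨by linarith, by linarith⟩
  rw [div_sub_div _ _ (by linarith) (by linarith), one_mul, mul_one, abs_div, abs_of_pos hpq₀,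
    div_le_div_iff₀ hpq₀ (by positivity)]
  calc |q - p| * t ^ 2 ≤ (2 * σ) * (16 / 9 * (p * q)) := by gcongr; linarith
    _ ≤ 4 * σ * (p * q) := by nlinarith

lemma summable_inv_two_pow_add_two : Summable fun n : ℕ => (2 : ℝ)⁻¹ ^ (n + 2) :=
  (summable_nat_add_iff 2).2 (summable_geometric_of_lt_one (by norm_num) (by norm_num))

lemma Delta_le_tsum {p q : ℝ → ℝ} {b : ℕ → ℝ}
    (h : ∀ n : ℕ, b n < 1 → ∀ x ∈ Icc ((n + 2 : ℝ)⁻¹) (1 - (n + 2 : ℝ)⁻¹),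
      |1 / p x - 1 / q x| ≤ b n) :
    Delta p q ≤ ∑' n : ℕ, (2 : ℝ)⁻¹ ^ (n + 2) * min (b n) 1 := by
  have hterm (n : ℕ) : min (⨆ x : Icc ((n + 2 : ℝ)⁻¹) (1 - (n + 2 : ℝ)⁻¹),
      |1 / p x - 1 / q x|) 1 ≤ min (b n) 1 := by
    rcases lt_or_ge (b n) 1 with hb | hb
    · have hδ : (n + 2 : ℝ)⁻¹ ≤ 1 - (n + 2 : ℝ)⁻¹ := by
        have : (n + 2 : ℝ)⁻¹ ≤ 2⁻¹ := inv_anti₀ two_pos (by linarith [n.cast_nonneg (α := ℝ)])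
        linarith
      have : Nonempty (Icc ((n + 2 : ℝ)⁻¹) (1 - (n + 2 : ℝ)⁻¹)) := ⟨⟨_, le_rfl, hδ⟩⟩
      exact min_le_min_right _ (ciSup_le fun x => h n hb x x.2)
    · exact (min_le_right _ _).trans_eq (min_eq_right hb).symm
  have hlower (n : ℕ) : 0 ≤ min (⨆ x : Icc ((n + 2 : ℝ)⁻¹) (1 - (n + 2 : ℝ)⁻¹),
      |1 / p x - 1 / q x|) 1 :=
    le_min (Real.iSup_nonneg fun _ => abs_nonneg _) zero_le_one
  refine Summable.tsum_le_tsum (fun n => mul_le_mul_of_nonneg_left (hterm n) (by positivity))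
    (summable_inv_two_pow_add_two.of_nonneg_of_le (fun n => mul_nonneg (by positivity) (hlower n))
      fun n => mul_le_of_le_one_right (by positivity) (min_le_right _ _))
    (summable_inv_two_pow_add_two.of_nonneg_of_le
      (fun n => mul_nonneg (by positivity) ((hlower n).trans (hterm n)))
      fun n => mul_le_of_le_one_right (by positivity) (min_le_right _ _))

noncomputable def smallPodBound (σ : ℝ) : ℝ :=
  ∑' n : ℕ, (2 : ℝ)⁻¹ ^ (n + 2) * min (4 * |σ| * ((n : ℝ) + 2) ^ 2) 1

lemma smallPodBound_nonneg (σ : ℝ) : 0 ≤ smallPodBound σ :=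
  tsum_nonneg fun _ => mul_nonneg (by positivity) (le_min (by positivity) zero_le_one)

lemma tendsto_smallPodBound : Tendsto smallPodBound (𝓝 0) (𝓝 0) := by
  have hterm (n : ℕ) : Tendsto (fun σ : ℝ => (2 : ℝ)⁻¹ ^ (n + 2) *
      min (4 * |σ| * ((n : ℝ) + 2) ^ 2) 1) (𝓝 0) (𝓝 0) :=
    (by fun_prop : Continuous _).tendsto' 0 0 (by simp)
  have hdom : ∀ᶠ σ in 𝓝 (0 : ℝ), ∀ n : ℕ,
      ‖(2 : ℝ)⁻¹ ^ (n + 2) * min (4 * |σ| * ((n : ℝ) + 2) ^ 2) 1‖ ≤ (2 : ℝ)⁻¹ ^ (n + 2) :=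
    Eventually.of_forall fun σ n => by
      rw [Real.norm_of_nonneg (mul_nonneg (by positivity) (le_min (by positivity) zero_le_one))]
      exact mul_le_of_le_one_right (by positivity) (min_le_right _ _)
  have h := tendsto_tsum_of_dominated_convergence summable_inv_two_pow_add_two hterm hdom
  rwa [tsum_zero] at h

/-- if two pods have dimension at most σ then the Δ distance of their
standard pods is at most φ(σ), where φ(σ) → 0 as σ → 0. -/
theorem Delta_small_for_small_pods :
    ∃ φ : ℝ → ℝ, (∀ σ, 0 ≤ φ σ) ∧
      Filter.Tendsto φ (nhdsWithin 0 (Set.Ioi 0)) (nhds 0) ∧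
      ∀ σ ∈ Set.Ioc (0:ℝ) (1/2), ∀ F G : CoalPair,
        tcFinite F → tcFinite G → podDim F ≤ σ → podDim G ≤ σ →
        Delta (stdPod F) (stdPod G) ≤ φ σ := by
  refine ⟨smallPodBound, smallPodBound_nonneg,
    tendsto_smallPodBound.mono_left nhdsWithin_le_nhds, ?_⟩
  rintro σ ⟨hσ, -⟩ F G hF hG hdF hdG
  rw [smallPodBound, abs_of_pos hσ]
  refine Delta_le_tsum fun n hn x hx => ?_
  have hn₂ : (1 : ℝ) ≤ (n : ℝ) + 2 := by linarith [n.cast_nonneg (α := ℝ)]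
  have hσδ : 4 * σ < ((n : ℝ) + 2)⁻¹ := by
    rw [inv_eq_one_div, lt_div_iff₀ (by positivity)]
    nlinarith
  have hxσ : x ∈ Ioo (σ / 2) (1 - σ / 2) := ⟨by linarith [hx.1], by linarith [hx.2]⟩
  have hδx : ((n : ℝ) + 2)⁻¹ ≤ min x (1 - x) := le_min hx.1 (by linarith [hx.2])
  calc |1 / stdPod F x - 1 / stdPod G x| ≤ 4 * σ / min x (1 - x) ^ 2 :=
        abs_one_div_sub_one_div_le (CoalPair.abs_stdPod_sub_min_le hF hdF hxσ)
          (CoalPair.abs_stdPod_sub_min_le hG hdG hxσ) (by linarith)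
    _ ≤ 4 * σ / ((n : ℝ) + 2)⁻¹ ^ 2 := by gcongr
    _ = 4 * σ * ((n : ℝ) + 2) ^ 2 := by rw [inv_pow, div_inv_eq_mul]
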